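/- arXiv:1210.6538 — 2 statements merged into one kernel-verified Lean document; each statement's English description precedes it below -/
import Mathlib

section
/- In any Brouwer algebra B, the equation ((a → b) ⊗ a) ⊕ a = ((a → b) ⊗ a) ⊕ b ⊕ a fails to witness the weak law of excluded middle in general, but in the Muchnik lattice the weak law of excluded middle holds: for every mass problem A, (A → 1) ⊗ ((A → 1) → 1) ≡_w 0, where 0 is the class of mass problems containing a computable function and 1 is the degree of the empty mass problem. -/
/-- `RecursiveIn O f` means the partial function `f : ℕ →. ℕ` is partial recursive
relative to the oracle `O : ℕ →. ℕ`. -/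
inductive RecursiveIn' (O : ℕ →. ℕ) : (ℕ →. ℕ) → Prop
  | oracle : RecursiveIn' O O
  | zero : RecursiveIn' O (pure 0)
  | succ : RecursiveIn' O Nat.succ
  | left : RecursiveIn' O fun n => (Nat.unpair n).1
  | right : RecursiveIn' O fun n => (Nat.unpair n).2
  | pair {f g : ℕ →. ℕ} : RecursiveIn' O f → RecursiveIn' O g →
      RecursiveIn' O fun n => Nat.pair <$> f n <*> g n
  | comp {f g : ℕ →. ℕ} : RecursiveIn' O f → RecursiveIn' O g →
      RecursiveIn' O fun n => g n >>= f
  | prec {f g : ℕ →. ℕ} : RecursiveIn' O f → RecursiveIn' O g →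
      RecursiveIn' O (Nat.unpaired fun a n =>
        n.rec (f a) fun y IH => do let i ← IH; g (Nat.pair a (Nat.pair y i)))
  | rfind {f : ℕ →. ℕ} : RecursiveIn' O f →
      RecursiveIn' O fun a => Nat.rfind fun n => (fun m => m = 0) <$> f (Nat.pair a n)

/-- Turing reducibility on total functions in Baire space. -/
def TuringLE (f g : ℕ → ℕ) : Prop := RecursiveIn' (↑g) (↑f)

/-- Turing equivalence. -/
def TuringEquiv (f g : ℕ → ℕ) : Prop := TuringLE f g ∧ TuringLE g f

/-- The join `f ⊕ g` of two elements of Baire space. -/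
def fjoin (f g : ℕ → ℕ) : ℕ → ℕ := fun n => if n % 2 = 0 then f (n / 2) else g (n / 2)

/-- Muchnik reducibility on mass problems. -/
def MuchnikLE (A B : Set (ℕ → ℕ)) : Prop := ∀ g ∈ B, ∃ f ∈ A, TuringLE f g

/-- Muchnik equivalence. -/
def MuchnikEquiv (A B : Set (ℕ → ℕ)) : Prop := MuchnikLE A B ∧ MuchnikLE B A

/-- The join `A ⊕ B` of two mass problems. -/
def mjoin (A B : Set (ℕ → ℕ)) : Set (ℕ → ℕ) :=
  {h | ∃ f ∈ A, ∃ g ∈ B, h = fjoin f g}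

/-- Muchnik implication `A → B`. -/
def mimp (A B : Set (ℕ → ℕ)) : Set (ℕ → ℕ) :=
  {g | ∀ f ∈ A, ∃ h ∈ B, TuringLE h (fjoin f g)}

/-- The upwards Turing closure of a mass problem. -/
def upClosure (A : Set (ℕ → ℕ)) : Set (ℕ → ℕ) := {f | ∃ g ∈ A, TuringLE g f}

/-! Negation in the Muchnik lattice is two-valued: `A → 1` is `1` (the empty problem) when `A` is
nonempty and `0` (all of Baire space) when `A` is empty. Hence one of `¬A` and `¬¬A` is always
the whole of Baire space, and so is their union. -/

theorem TuringLE.refl (f : ℕ → ℕ) : TuringLE f f := RecursiveIn'.oracle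

theorem MuchnikLE.refl (A : Set (ℕ → ℕ)) : MuchnikLE A A :=
  fun g hg => ⟨g, hg, TuringLE.refl g⟩

theorem MuchnikEquiv.refl (A : Set (ℕ → ℕ)) : MuchnikEquiv A A :=
  ⟨MuchnikLE.refl A, MuchnikLE.refl A⟩

theorem mimp_empty_left (B : Set (ℕ → ℕ)) : mimp ∅ B = Set.univ :=
  Set.eq_univ_of_forall fun _ _ hf => absurd hf (Set.notMem_empty _)

theorem mimp_empty_right_of_nonempty {A : Set (ℕ → ℕ)} (hA : A.Nonempty) : mimp A ∅ = ∅ :=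
  Set.eq_empty_of_forall_notMem fun _ hg =>
    let ⟨f, hf⟩ := hA
    let ⟨_, hh, _⟩ := hg f hf
    Set.notMem_empty _ hh

theorem mimp_empty_union_mimp_mimp_empty (A : Set (ℕ → ℕ)) :
    mimp A ∅ ∪ mimp (mimp A ∅) ∅ = Set.univ := by
  rcases A.eq_empty_or_nonempty with rfl | hA
  · rw [mimp_empty_left, Set.univ_union]
  · rw [mimp_empty_right_of_nonempty hA, mimp_empty_left, Set.union_univ]

/-- The weak law of the excluded middle holds in the Muchnik lattice: for every mass
problem `A`, the mass problem `(A → 1) ⊗ ((A → 1) → 1)` is Muchnik equivalent to the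
least degree `0` (the degree of `ω^ω`, the class of mass problems containing a computable
function), where `1` is the degree of the empty mass problem, `⊗` is the meet (union) and
`→` is Muchnik implication. -/
theorem muchnik_weak_lem (A : Set (ℕ → ℕ)) :
    MuchnikEquiv ((mimp A ∅) ∪ (mimp (mimp A ∅) ∅)) (Set.univ : Set (ℕ → ℕ)) := by
  rw [mimp_empty_union_mimp_mimp_empty]
  exact MuchnikEquiv.refl _
end

section
/- Let A ⊆ ω^ω be a non-empty countable class downwards closed under Turing reducibility. Suppose: (a) for every f ∈ A there exists h ∈ A with h ≰_T f; and (b) for every f ∈ A, every finite B ⊆ {g ∈ A : g ≰_T f}, and every h₀ ∈ A with h₀ ≰_T f, there exists h₁ ∈ A with h₁ >_T f, h₀ ⊕ h₁ ∉ A, and h₁ ≱_T g for all g ∈ B. Then for every f ∈ A and every finite B ⊆ {g ∈ A : g ≰_T f} there exists h ∈ A with h >_T f and g ⊕ h ∉ A for all g ∈ B. -/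
/-!
Induction on `B`. For `a ∈ B`, condition (b) with `h₀ := a` gives `h₁ >_T f` with `a ⊕ h₁ ∉ A`
and no element of `B` below `h₁`, so the induction hypothesis applies to `h₁` and `B \ {a}`.
Every `h ≥_T h₁` keeps `a ⊕ h ∉ A`, since `a ⊕ h₁ ≤_T a ⊕ h` and `A` is downwards closed.
For `B = ∅`, (a) supplies the `h₀` needed to invoke (b).
-/

namespace RecursiveIn'

variable {O : ℕ →. ℕ}

lemma of_partrec {f : ℕ →. ℕ} (h : Nat.Partrec f) : RecursiveIn' O f := by
  induction h with
  | zero => exact .zero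
  | succ => exact .succ
  | left => exact .left
  | right => exact .right
  | pair _ _ ihf ihg => exact .pair ihf ihg
  | comp _ _ ihf ihg => exact .comp ihf ihg
  | prec _ _ ihf ihg => exact .prec ihf ihg
  | rfind _ ih => exact .rfind ih

lemma of_primrec {u : ℕ → ℕ} (hu : Primrec u) : RecursiveIn' O u :=
  of_partrec (Nat.Partrec.of_primrec (Primrec.nat_iff.mp hu))

lemma trans {O' f : ℕ →. ℕ} (hf : RecursiveIn' O f) (hO : RecursiveIn' O' O) :
    RecursiveIn' O' f := by
  induction hf with
  | oracle => exact hO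
  | zero => exact .zero
  | succ => exact .succ
  | left => exact .left
  | right => exact .right
  | pair _ _ ihf ihg => exact .pair ihf ihg
  | comp _ _ ihf ihg => exact .comp ihf ihg
  | prec _ _ ihf ihg => exact .prec ihf ihg
  | rfind _ ih => exact .rfind ih

lemma of_eq {f g : ℕ →. ℕ} (hf : RecursiveIn' O f) (h : ∀ n, f n = g n) : RecursiveIn' O g :=
  funext h ▸ hf

lemma comp_primrec {f : ℕ →. ℕ} {u : ℕ → ℕ} (hf : RecursiveIn' O f) (hu : Primrec u) :
    RecursiveIn' O fun n => f (u n) :=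
  (RecursiveIn'.comp hf (of_primrec hu)).of_eq fun _ => Part.bind_some _ _

lemma primrec_comp {u v : ℕ → ℕ} (hu : RecursiveIn' O u) (hv : Primrec v) :
    RecursiveIn' O (fun n => v (u n) : ℕ → ℕ) :=
  (RecursiveIn'.comp (of_primrec hv) hu).of_eq fun _ => Part.bind_some _ _

lemma pair_total {u v : ℕ → ℕ} (hu : RecursiveIn' O u) (hv : RecursiveIn' O v) :
    RecursiveIn' O (fun n => Nat.pair (u n) (v n) : ℕ → ℕ) :=
  (RecursiveIn'.pair hu hv).of_eq fun n => by simp [PFun.coe_val, Seq.seq]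

end RecursiveIn'

lemma TuringLE.trans {f g h : ℕ → ℕ} (hfg : TuringLE f g) (hgh : TuringLE g h) : TuringLE f h :=
  RecursiveIn'.trans hfg hgh

lemma turingLE_comp_primrec (f : ℕ → ℕ) {u : ℕ → ℕ} (hu : Primrec u) :
    TuringLE (fun n => f (u n)) f :=
  (RecursiveIn'.comp_primrec .oracle hu).of_eq fun _ => rfl

lemma left_le_fjoin (g h : ℕ → ℕ) : TuringLE g (fjoin g h) := by
  have hfg : (fun n => fjoin g h (2 * n)) = g := by
    funext n
    simp [fjoin]
  simpa only [hfg] using turingLE_comp_primrec (fjoin g h) Primrec.nat_double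

lemma right_le_fjoin (g h : ℕ → ℕ) : TuringLE h (fjoin g h) := by
  have hfh : (fun n => fjoin g h (2 * n + 1)) = h := by
    funext n
    simp [fjoin, Nat.add_mod, show (2 * n + 1) / 2 = n by omega]
  simpa only [hfh] using turingLE_comp_primrec (fjoin g h) (Primrec.succ.comp Primrec.nat_double)

lemma fjoin_le {a b c : ℕ → ℕ} (hac : TuringLE a c) (hbc : TuringLE b c) :
    TuringLE (fjoin a b) c := by
  have hhalf : Primrec (fun n : ℕ => n / 2) := Primrec.nat_div.comp .id (.const 2)
  -- `n ↦ ⟨n, ⟨a (n / 2), b (n / 2)⟩⟩`, from which a primitive recursive selector reads `fjoin a b n`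
  have htriple : RecursiveIn' (↑c) (fun n => Nat.pair n (Nat.pair (a (n / 2)) (b (n / 2))) :
      ℕ → ℕ) :=
    .pair_total (.of_primrec Primrec.id)
      (.pair_total (hac.comp_primrec hhalf) (hbc.comp_primrec hhalf))
  have hsel : Primrec fun m : ℕ =>
      if m.unpair.1 % 2 = 0 then m.unpair.2.unpair.1 else m.unpair.2.unpair.2 := by
    have h₁ : Primrec fun m : ℕ => m.unpair.1 := Primrec.fst.comp Primrec.unpair
    have h₂ : Primrec fun m : ℕ => m.unpair.2 := Primrec.snd.comp Primrec.unpair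
    exact Primrec.ite
      (PrimrecPred.comp (Primrec.eq.comp (Primrec.nat_mod.comp h₁ (.const 2)) (.const 0)) .id)
      (h₁.comp h₂) (h₂.comp h₂)
  exact (htriple.primrec_comp hsel).of_eq fun n => by simp [fjoin]

lemma fjoin_mono_right {g h h' : ℕ → ℕ} (hle : TuringLE h h') :
    TuringLE (fjoin g h) (fjoin g h') :=
  fjoin_le (left_le_fjoin g h') (hle.trans (right_le_fjoin g h'))

lemma fjoin_notMem_of_turingLE {A : Set (ℕ → ℕ)}
    (hdc : ∀ f ∈ A, ∀ g : ℕ → ℕ, TuringLE g f → g ∈ A) {g h h' : ℕ → ℕ}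
    (hnot : fjoin g h ∉ A) (hle : TuringLE h h') : fjoin g h' ∉ A :=
  fun hmem => hnot (hdc _ hmem _ (fjoin_mono_right hle))

lemma exists_strict_upper_bound_avoiding_joins {A : Set (ℕ → ℕ)}
    (hdc : ∀ f ∈ A, ∀ g : ℕ → ℕ, TuringLE g f → g ∈ A)
    (hup : ∀ f ∈ A, ∃ h ∈ A, TuringLE f h ∧ ¬ TuringLE h f)
    (hb : ∀ f ∈ A, ∀ B : Set (ℕ → ℕ), B.Finite → B ⊆ {g | g ∈ A ∧ ¬ TuringLE g f} →
      ∀ h₀ ∈ A, ¬ TuringLE h₀ f →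
        ∃ h₁ ∈ A, (TuringLE f h₁ ∧ ¬ TuringLE h₁ f) ∧ fjoin h₀ h₁ ∉ A ∧
          ∀ g ∈ B, ¬ TuringLE g h₁)
    {B : Set (ℕ → ℕ)} (hB : B.Finite) :
    ∀ f ∈ A, B ⊆ {g | g ∈ A ∧ ¬ TuringLE g f} →
      ∃ h ∈ A, (TuringLE f h ∧ ¬ TuringLE h f) ∧ ∀ g ∈ B, fjoin g h ∉ A := by
  induction B, hB using Set.Finite.induction_on with
  | empty =>
    intro f hf _
    obtain ⟨h, hA, hfh⟩ := hup f hf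
    exact ⟨h, hA, hfh, fun _ => False.elim⟩
  | @insert a s _ hs ih =>
    intro f hf hsub
    obtain ⟨haA, haf⟩ := hsub (Set.mem_insert a s)
    obtain ⟨h₁, h₁A, ⟨hfh₁, hh₁f⟩, ha_h₁, hnot_le_h₁⟩ :=
      hb f hf (insert a s) (hs.insert a) hsub a haA haf
    have hs_h₁ : s ⊆ {g | g ∈ A ∧ ¬ TuringLE g h₁} := fun g hg =>
      ⟨(hsub (Set.mem_insert_of_mem a hg)).1, hnot_le_h₁ g (Set.mem_insert_of_mem a hg)⟩
    obtain ⟨h, hA, ⟨hh₁h, -⟩, hs_h⟩ := ih h₁ h₁A hs_h₁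
    refine ⟨h, hA, ⟨hfh₁.trans hh₁h, fun hhf => hh₁f (hh₁h.trans hhf)⟩, ?_⟩
    rintro g (rfl | hg)
    · exact fjoin_notMem_of_turingLE hdc ha_h₁ hh₁h
    · exact hs_h g hg

theorem strict_extension_of_avoiding_general (A : Set (ℕ → ℕ))
    (hdc : ∀ f ∈ A, ∀ g : ℕ → ℕ, TuringLE g f → g ∈ A)
    (ha : ∀ f ∈ A, ∃ h ∈ A, ¬ TuringLE h f)
    (hb : ∀ f ∈ A, ∀ B : Set (ℕ → ℕ), B.Finite → B ⊆ {g | g ∈ A ∧ ¬ TuringLE g f} →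
      ∀ h₀ ∈ A, ¬ TuringLE h₀ f →
        ∃ h₁ ∈ A, (TuringLE f h₁ ∧ ¬ TuringLE h₁ f) ∧ fjoin h₀ h₁ ∉ A ∧
          ∀ g ∈ B, ¬ TuringLE g h₁) :
    ∀ f ∈ A, ∀ B : Set (ℕ → ℕ), B.Finite → B ⊆ {g | g ∈ A ∧ ¬ TuringLE g f} →
      ∃ h ∈ A, (TuringLE f h ∧ ¬ TuringLE h f) ∧ ∀ g ∈ B, fjoin g h ∉ A := by
  have hup : ∀ f ∈ A, ∃ h ∈ A, TuringLE f h ∧ ¬ TuringLE h f := fun f hf => by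
    obtain ⟨h₀, h₀A, h₀f⟩ := ha f hf
    obtain ⟨h₁, h₁A, hfh₁, -⟩ := hb f hf ∅ Set.finite_empty (Set.empty_subset _) h₀ h₀A h₀f
    exact ⟨h₁, h₁A, hfh₁⟩
  intro f hf B hB hBf
  exact exists_strict_upper_bound_avoiding_joins hdc hup hb hB f hf hBf

/-- Condition (iii) implies condition (ii) of Proposition 3.2: if (a) above every `f ∈ A`
there is `h ∈ A` with `h ≰_T f`, and (b) for every `f ∈ A`, finite
`B ⊆ {g ∈ A : g ≰_T f}` and `h₀ ∈ A` with `h₀ ≰_T f` there is `h₁ ∈ A` strictly above `f`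
with `h₀ ⊕ h₁ ∉ A` and `h₁ ≱_T g` for all `g ∈ B`, then for every `f ∈ A` and finite
`B ⊆ {g ∈ A : g ≰_T f}` there is `h ∈ A` strictly above `f` with `g ⊕ h ∉ A` for all
`g ∈ B`. -/
theorem strict_extension_of_avoiding (A : Set (ℕ → ℕ))
    (hne : A.Nonempty) (hct : A.Countable)
    (hdc : ∀ f ∈ A, ∀ g : ℕ → ℕ, TuringLE g f → g ∈ A)
    (ha : ∀ f ∈ A, ∃ h ∈ A, ¬ TuringLE h f)
    (hb : ∀ f ∈ A, ∀ B : Set (ℕ → ℕ), B.Finite → B ⊆ {g | g ∈ A ∧ ¬ TuringLE g f} →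
      ∀ h₀ ∈ A, ¬ TuringLE h₀ f →
        ∃ h₁ ∈ A, (TuringLE f h₁ ∧ ¬ TuringLE h₁ f) ∧ fjoin h₀ h₁ ∉ A ∧
          ∀ g ∈ B, ¬ TuringLE g h₁) :
    ∀ f ∈ A, ∀ B : Set (ℕ → ℕ), B.Finite → B ⊆ {g | g ∈ A ∧ ¬ TuringLE g f} →
      ∃ h ∈ A, (TuringLE f h ∧ ¬ TuringLE h f) ∧ ∀ g ∈ B, fjoin g h ∉ A :=
  strict_extension_of_avoiding_general A hdc ha hb
end
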